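/- arXiv:1712.06904 — 6 statements merged into one kernel-verified Lean document; each statement's English description precedes it below -/
import Mathlib

section
/- For every K > 0, every D ∈ (0,∞) and every θ ∈ (0,1), one has I_{(K,∞,D)}(θ) > I_{(K,∞,∞)}(θ). -/
open Set MeasureTheory intervalIntegral

/-!
Write `φ(s) = exp (-K s²/2)`, `Φ(x) = ∫_{-∞}^x φ` and `T = ∫ φ`, so that
`I_{(K,∞,∞)}(θ) = φ(a)/T` with `Φ(a) = θT`, and `f_{ξ,D}(θ) = φ(b)/M` with
`M = Φ(ξ+D) - Φ(ξ)` and `Φ(b) = Φ(ξ) + θM`. By log-concavity (in the form of the Mills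
inequality `-Kx Φ(x) ≤ φ(x)`) the ratio `φ/Φ` is antitone. If `b ≤ a` this gives
`(Φ(ξ) + θM) φ(a) ≤ θT φ(b)`, and since `Φ(ξ) ≥ Φ(-D) > 0` and `θM ≤ T`,
`φ(b)/M ≥ (φ(a)/T) (1 + Φ(-D)/T)`; the case `a ≤ b` is its mirror image under `s ↦ -s`.
The bound is uniform in `ξ ∈ [-D, 0]`, so it survives the infimum and is strictly above `φ(a)/T`.
-/

lemma exists_mem_Ioo_intervalIntegral_eq_mul {f : ℝ → ℝ} (hf : Continuous f) {ξ η θ : ℝ}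
    (hξη : ξ ≤ η) (hθ : θ ∈ Ioo (0 : ℝ) 1) (hpos : 0 < ∫ s in ξ..η, f s) :
    ∃ b ∈ Ioo ξ η, ∫ s in ξ..b, f s = θ * ∫ s in ξ..η, f s := by
  have hprim : ContinuousOn (fun y => ∫ s in ξ..y, f s) (Icc ξ η) :=
    (continuous_primitive (fun u v => hf.intervalIntegrable u v) ξ).continuousOn
  refine intermediate_value_Ioo hξη hprim ⟨?_, ?_⟩
  · simpa using mul_pos hθ.1 hpos
  · exact mul_lt_of_lt_one_left hpos hθ.2

namespace Gaussian

open Filter Real Topology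

noncomputable def gaussian (K s : ℝ) : ℝ := exp (-K * s ^ 2 / 2)

/-- The unnormalized Gaussian distribution function `Φ`. -/
noncomputable def gaussianIic (K x : ℝ) : ℝ := ∫ s in Iic x, gaussian K s

variable {K : ℝ}

lemma gaussian_pos (s : ℝ) : 0 < gaussian K s := exp_pos _

lemma gaussian_neg (s : ℝ) : gaussian K (-s) = gaussian K s := by
  simp only [gaussian, neg_sq]

@[fun_prop]
lemma continuous_gaussian : Continuous (gaussian K) := by
  unfold gaussian; fun_prop

lemma gaussian_eq_exp_neg_mul_sq : gaussian K = fun s => exp (-(K / 2) * s ^ 2) := by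
  funext s; unfold gaussian; congr 1; ring

lemma hasDerivAt_gaussian (x : ℝ) : HasDerivAt (gaussian K) (gaussian K x * (-K * x)) x := by
  unfold gaussian
  convert (((hasDerivAt_pow 2 x).const_mul (-K)).div_const 2).exp using 1
  push_cast; ring

lemma intervalIntegral_gaussian_pos {x y : ℝ} (hxy : x < y) : 0 < ∫ s in x..y, gaussian K s :=
  intervalIntegral_pos_of_pos (continuous_gaussian.intervalIntegrable _ _) gaussian_pos hxy

lemma gaussianIic_nonneg (x : ℝ) : 0 ≤ gaussianIic K x :=
  setIntegral_nonneg measurableSet_Iic fun s _ => (gaussian_pos s).le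

variable (hK : 0 < K)
include hK

lemma integrable_gaussian : Integrable (gaussian K) := by
  rw [gaussian_eq_exp_neg_mul_sq]; exact integrable_exp_neg_mul_sq (by linarith)

lemma integrable_mul_gaussian : Integrable (fun s => s * gaussian K s) := by
  rw [gaussian_eq_exp_neg_mul_sq]; exact integrable_mul_exp_neg_mul_sq (by linarith)

lemma sqrt_mul_integral_gaussian : sqrt (K / (2 * π)) * ∫ s, gaussian K s = 1 := by
  rw [gaussian_eq_exp_neg_mul_sq, integral_gaussian, ← sqrt_mul (by positivity),
    show K / (2 * π) * (π / (K / 2)) = 1 by field_simp, sqrt_one]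

lemma integral_gaussian_pos : 0 < ∫ s, gaussian K s := by
  have h := sqrt_mul_integral_gaussian hK
  exact pos_of_mul_pos_right (h ▸ one_pos) (sqrt_nonneg _)

lemma gaussianIic_sub (x y : ℝ) :
    gaussianIic K y - gaussianIic K x = ∫ s in x..y, gaussian K s :=
  integral_Iic_sub_Iic (integrable_gaussian hK).integrableOn (integrable_gaussian hK).integrableOn

lemma hasDerivAt_gaussianIic (x : ℝ) : HasDerivAt (gaussianIic K) (gaussian K x) x := by
  have hc : Continuous (gaussian K) := continuous_gaussian
  have h := (integral_hasDerivAt_right (hc.intervalIntegrable 0 x)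
    (hc.stronglyMeasurableAtFilter _ _) hc.continuousAt).const_add (gaussianIic K 0)
  refine h.congr_of_eventuallyEq (Eventually.of_forall fun y => ?_)
  linarith [gaussianIic_sub hK 0 y]

lemma gaussianIic_pos (x : ℝ) : 0 < gaussianIic K x := by
  linarith [gaussianIic_sub hK (x - 1) x, gaussianIic_nonneg (K := K) (x - 1),
    intervalIntegral_gaussian_pos (K := K) (sub_one_lt x)]

lemma gaussianIic_mono : Monotone (gaussianIic K) := fun x y hxy => by
  linarith [gaussianIic_sub hK x y,
    integral_nonneg (μ := volume) hxy fun s _ => (gaussian_pos (K := K) s).le]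

lemma gaussianIic_le_integral (x : ℝ) : gaussianIic K x ≤ ∫ s, gaussian K s :=
  setIntegral_le_integral (integrable_gaussian hK)
    (Eventually.of_forall fun s => (gaussian_pos s).le)

lemma gaussianIic_neg (x : ℝ) :
    gaussianIic K (-x) = (∫ s, gaussian K s) - gaussianIic K x := by
  have h_refl : gaussianIic K (-x) = ∫ s in Ioi x, gaussian K s := by
    rw [gaussianIic, ← integral_comp_neg_Ioi]
    simp only [gaussian_neg]
  rw [h_refl, ← integral_Iic_add_Ioi (integrable_gaussian hK).integrableOn
    (integrable_gaussian hK).integrableOn, gaussianIic]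
  ring

lemma tendsto_gaussian_atBot : Tendsto (gaussian K) atBot (𝓝 0) := by
  have hsq : Tendsto (fun s : ℝ => s ^ 2) atBot atTop :=
    ((tendsto_pow_atTop two_ne_zero).comp tendsto_neg_atBot_atTop).congr fun s => by simp
  have h := tendsto_neg_atTop_atBot.comp (hsq.const_mul_atTop (by linarith : 0 < K / 2))
  rw [gaussian_eq_exp_neg_mul_sq]
  exact tendsto_exp_atBot.comp (h.congr fun s => by simp)

lemma integral_Iic_mul_gaussian (x : ℝ) : ∫ s in Iic x, s * gaussian K s = -gaussian K x / K := by
  have hderiv : ∀ s ∈ Iic x, HasDerivAt (fun t => -gaussian K t / K) (s * gaussian K s) s :=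
    fun s _ => ((hasDerivAt_gaussian s).neg.div_const K).congr_deriv (by field_simp)
  have htend : Tendsto (fun t => -gaussian K t / K) atBot (𝓝 0) := by
    simpa using (tendsto_gaussian_atBot hK).neg.div_const K
  rw [integral_Iic_of_hasDerivAt_of_tendsto' hderiv (integrable_mul_gaussian hK).integrableOn htend]
  ring

lemma neg_mul_gaussianIic_le_gaussian (x : ℝ) : -(K * x * gaussianIic K x) ≤ gaussian K x := by
  rcases le_or_gt 0 x with hx | hx
  · have := mul_nonneg (mul_nonneg hK.le hx) (gaussianIic_nonneg (K := K) x)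
    linarith [gaussian_pos (K := K) x]
  · have hle : gaussianIic K x ≤ ∫ s in Iic x, x⁻¹ * (s * gaussian K s) := by
      refine setIntegral_mono_on (integrable_gaussian hK).integrableOn
        ((integrable_mul_gaussian hK).const_mul _).integrableOn measurableSet_Iic fun s hs => ?_
      have hs : 1 ≤ s / x := by rw [le_div_iff_of_neg hx]; linarith [mem_Iic.mp hs]
      calc gaussian K s ≤ s / x * gaussian K s := le_mul_of_one_le_left (gaussian_pos s).le hs
        _ = x⁻¹ * (s * gaussian K s) := by ring
    rw [MeasureTheory.integral_const_mul, integral_Iic_mul_gaussian hK] at hle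
    have hKx : 0 ≤ -(K * x) := by nlinarith
    calc -(K * x * gaussianIic K x) = -(K * x) * gaussianIic K x := by ring
      _ ≤ -(K * x) * (x⁻¹ * (-gaussian K x / K)) := mul_le_mul_of_nonneg_left hle hKx
      _ = gaussian K x := by field_simp [hx.ne]

/-- `φ / Φ` is antitone. -/
lemma gaussianIic_mul_gaussian_le {x y : ℝ} (hxy : x ≤ y) :
    gaussianIic K x * gaussian K y ≤ gaussian K x * gaussianIic K y := by
  let g t := gaussian K x * gaussianIic K t - gaussianIic K x * gaussian K t
  have hg : ∀ t, HasDerivAt g (gaussian K t * (gaussian K x + K * t * gaussianIic K x)) t :=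
    fun t => (((hasDerivAt_gaussianIic hK t).const_mul _).sub
      ((hasDerivAt_gaussian t).const_mul _)).congr_deriv (by ring)
  have hg_mono : MonotoneOn g (Ici x) := by
    refine monotoneOn_of_hasDerivWithinAt_nonneg (convex_Ici x)
      (fun t _ => (hg t).continuousAt.continuousWithinAt) (fun t _ => (hg t).hasDerivWithinAt)
      fun t ht => ?_
    rw [interior_Ici, mem_Ioi] at ht
    have hxt : K * x * gaussianIic K x ≤ K * t * gaussianIic K x := by
      gcongr
      exact gaussianIic_nonneg x
    have := neg_mul_gaussianIic_le_gaussian hK x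
    exact mul_nonneg (gaussian_pos t).le (by linarith)
  have := hg_mono self_mem_Ici hxy hxy
  simp only [g] at this
  linarith

lemma le_gaussian_div_of_le {a b c θ M : ℝ} (hba : b ≤ a) (hθ : 0 < θ) (hM : 0 < M)
    (hc : 0 ≤ c) (hθM : θ * M ≤ ∫ s, gaussian K s) (hb : c + θ * M ≤ gaussianIic K b)
    (ha : gaussianIic K a = θ * ∫ s, gaussian K s) :
    gaussian K a / (∫ s, gaussian K s) * (1 + c / ∫ s, gaussian K s) ≤ gaussian K b / M := by
  set T := ∫ s, gaussian K s
  have hT : 0 < T := integral_gaussian_pos hK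
  have hφa := gaussian_pos (K := K) a
  have hratio : (c + θ * M) * gaussian K a ≤ gaussian K b * (θ * T) := by
    have := gaussianIic_mul_gaussian_le hK hba
    rw [ha] at this
    nlinarith [mul_le_mul_of_nonneg_right hb hφa.le]
  have hθc : θ * (T + c) * M ≤ (c + θ * M) * T := by nlinarith [mul_le_mul_of_nonneg_left hθM hc]
  rw [div_mul_eq_mul_div, one_add_div hT.ne', mul_div_assoc', div_div,
    div_le_div_iff₀ (by positivity) hM]
  refine le_of_mul_le_mul_left ?_ hθ
  calc θ * (gaussian K a * (T + c) * M) = gaussian K a * (θ * (T + c) * M) := by ring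
    _ ≤ gaussian K a * ((c + θ * M) * T) := mul_le_mul_of_nonneg_left hθc hφa.le
    _ = (c + θ * M) * gaussian K a * T := by ring
    _ ≤ gaussian K b * (θ * T) * T := mul_le_mul_of_nonneg_right hratio hT.le
    _ = θ * (gaussian K b * (T * T)) := by ring

lemma le_gaussian_div_intervalIntegral {D ξ θ a b : ℝ} (hξ : ξ ∈ Icc (-D) 0)
    (hb : b ∈ Ioo ξ (ξ + D)) (hθ : θ ∈ Ioo (0 : ℝ) 1)
    (hθb : θ = (∫ s in ξ..b, gaussian K s) / ∫ s in ξ..(ξ + D), gaussian K s)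
    (ha : gaussianIic K a = θ * ∫ s, gaussian K s) :
    gaussian K a / (∫ s, gaussian K s) * (1 + gaussianIic K (-D) / ∫ s, gaussian K s) ≤
      gaussian K b / ∫ s in ξ..(ξ + D), gaussian K s := by
  set T := ∫ s, gaussian K s
  set M := ∫ s in ξ..(ξ + D), gaussian K s
  have hM : 0 < M := intervalIntegral_gaussian_pos (hb.1.trans hb.2)
  have hMΦ : M = gaussianIic K (ξ + D) - gaussianIic K ξ := (gaussianIic_sub hK _ _).symm
  have hΦb : gaussianIic K b = gaussianIic K ξ + θ * M := by
    rw [hθb, div_mul_cancel₀ _ hM.ne', ← gaussianIic_sub hK]; ring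
  have hM_le : M ≤ T := by
    linarith [gaussianIic_le_integral hK (ξ + D), gaussianIic_nonneg (K := K) ξ]
  have hc := (gaussianIic_pos hK (-D)).le
  rcases le_total b a with hba | hab
  · refine le_gaussian_div_of_le hK hba hθ.1 hM hc
      ((mul_le_of_le_one_left hM.le hθ.2.le).trans hM_le) ?_ ha
    linarith [gaussianIic_mono hK hξ.1]
  · have h := le_gaussian_div_of_le hK (neg_le_neg hab) (sub_pos.2 hθ.2) hM hc
      ((mul_le_of_le_one_left hM.le (by linarith [hθ.1])).trans hM_le) ?_
      (by rw [gaussianIic_neg hK, ha]; ring)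
    · rwa [gaussian_neg, gaussian_neg] at h
    rw [gaussianIic_neg hK b, hΦb]
    linarith [gaussianIic_mono hK (show -D ≤ -(ξ + D) by linarith [hξ.2]),
      gaussianIic_neg hK (ξ + D)]

end Gaussian

open Gaussian in
/-- For every K > 0, D ∈ (0,∞) and θ ∈ (0,1),
`I_{(K,∞,D)}(θ) > I_{(K,∞,∞)}(θ)`.  Here `a = a(θ)` is characterized by the
hypothesis `ha`, and `I_{(K,∞,D)}(θ)` is the infimum over `ξ ∈ [-D,0]` of the
values `f_{ξ,D}(θ)`, expressed as the `sInf` of the set of such values (with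
`b = b(θ)` characterized implicitly). -/
theorem stmt0 (K D θ a : ℝ) (hK : 0 < K) (hD : 0 < D) (hθ : θ ∈ Set.Ioo (0:ℝ) 1)
    (ha : θ = ∫ s in Set.Iic a, Real.sqrt (K / (2 * Real.pi)) * Real.exp (-K * s ^ 2 / 2)) :
    sInf { y : ℝ | ∃ ξ ∈ Set.Icc (-D) (0:ℝ), ∃ b ∈ Set.Ioo ξ (ξ + D),
        θ = (∫ s in ξ..b, Real.exp (-K * s ^ 2 / 2)) /
              (∫ s in ξ..(ξ + D), Real.exp (-K * s ^ 2 / 2)) ∧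
        y = Real.exp (-K * b ^ 2 / 2) /
              (∫ s in ξ..(ξ + D), Real.exp (-K * s ^ 2 / 2)) } >
      Real.sqrt (K / (2 * Real.pi)) * Real.exp (-K * a ^ 2 / 2) := by
  have hgauss : ∀ s, Real.exp (-K * s ^ 2 / 2) = gaussian K s := fun _ => rfl
  simp only [hgauss] at ha ⊢
  set T := ∫ s, gaussian K s
  have hT : 0 < T := integral_gaussian_pos hK
  have hnorm : Real.sqrt (K / (2 * Real.pi)) = 1 / T :=
    eq_one_div_of_mul_eq_one_left (sqrt_mul_integral_gaussian hK)
  have hΦa : gaussianIic K a = θ * T := by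
    rw [ha, MeasureTheory.integral_const_mul, hnorm, ← gaussianIic]; field_simp
  rw [hnorm, one_div_mul_eq_div]
  have hgap : 1 < 1 + gaussianIic K (-D) / T := lt_add_of_pos_right _ (by
    have := gaussianIic_pos hK (-D); positivity)
  refine (lt_mul_of_one_lt_right (div_pos (gaussian_pos a) hT) hgap).trans_le (le_csInf ?_ ?_)
  · have hM := intervalIntegral_gaussian_pos (K := K) (lt_add_of_pos_right (-D) hD)
    obtain ⟨b, hb, hbθ⟩ :=
      exists_mem_Ioo_intervalIntegral_eq_mul continuous_gaussian
        (le_add_of_nonneg_right hD.le) hθ hM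
    refine ⟨_, -D, ⟨le_rfl, neg_nonpos.2 hD.le⟩, b, hb, ?_, rfl⟩
    rw [hbθ, mul_div_cancel_right₀ _ hM.ne']
  · rintro y ⟨ξ, hξ, b, hb, hθb, rfl⟩
    exact le_gaussian_div_intervalIntegral hK hξ hb hθ hθb hΦa
end

section
/- Let ψ : ℝ → ℝ be a strictly convex function with ψ(−x) = ψ(x) for all x, and let m := e^{−ψ(x)} dx. Let a < b be real numbers with a + b ≥ 0, and suppose a' > a and b' > a' are real numbers with m((a',b')) = m((a,b)). Then e^{−ψ(a')} + e^{−ψ(b')} < e^{−ψ(a)} + e^{−ψ(b)}; that is, shifting the interval (a,b) to the right strictly decreases its weighted perimeter. -/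
/-!
Write `f x = exp (-ψ x)`. Equal mass of `(a, b)` and `(a', b')` means the flanking pieces `(a, a')`
and `(b, b')` have equal mass, so `b < b'`; as `ψ` is even and strictly convex it increases with
`|x|`. If `ψ a ≤ ψ a'` we are done. Otherwise `u = |a'| < v = -a ≤ b`, and by reflection
`m(u, v) ≤ m(a, a') = m(b, b')`. Let `σ ≥ 0` be the slope of `ψ` over `[u, v]`: by convexity `ψ`
lies below its chord on `[u, v]` and above the line of slope `σ` through `(b, ψ b)` on `[b, ∞)`,
strictly so after `b`. Comparing `f` with the exponentials of these affine functions, which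
integrate explicitly, gives `f u - f v ≤ σ m(u, v) ≤ σ m(b, b') < f b - f b'`.
-/

open Set MeasureTheory intervalIntegral

lemma Function.Even.apply_abs {α β : Type*} [AddGroup α] [LinearOrder α] {g : α → β}
    (hg : g.Even) (x : α) : g |x| = g x := by
  rcases abs_choice x with h | h <;> simp only [h, hg x]

section Convex

variable {𝕜 : Type*} [Field 𝕜] [LinearOrder 𝕜] [IsStrictOrderedRing 𝕜] {s : Set 𝕜} {f : 𝕜 → 𝕜}

lemma StrictConvexOn.strictMonoOn_Ici_of_even (hf : StrictConvexOn 𝕜 univ f) (heven : f.Even) :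
    StrictMonoOn f (Ici 0) := by
  intro x hx y _ hxy
  have hy : 0 < y := lt_of_le_of_lt hx hxy
  have hx_mem : x ∈ openSegment 𝕜 (-y) y := by
    rw [openSegment_eq_Ioo (by linarith)]
    exact ⟨by linarith [mem_Ici.mp hx], hxy⟩
  simpa only [heven y, max_self] using hf.lt_on_openSegment (mem_univ _) (mem_univ _) (by linarith) hx_mem

lemma StrictConvexOn.lt_iff_abs_lt_of_even (hf : StrictConvexOn 𝕜 univ f) (heven : f.Even)
    (x y : 𝕜) : f x < f y ↔ |x| < |y| := by
  rw [← heven.apply_abs x, ← heven.apply_abs y]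
  exact (hf.strictMonoOn_Ici_of_even heven).lt_iff_lt (abs_nonneg x) (abs_nonneg y)

lemma ConvexOn.le_add_slope_mul (hf : ConvexOn 𝕜 s f) {u v x : 𝕜} (hu : u ∈ s) (hv : v ∈ s)
    (hx : x ∈ Icc u v) : f x ≤ f u + slope f u v * (x - u) := by
  rcases hx.1.eq_or_lt with rfl | hux
  · simp
  have hxs : x ∈ s := hf.1.ordConnected.out hu hv hx
  have hslope : slope f u x ≤ slope f u v :=
    hf.slope_mono hu ⟨hxs, hux.ne'⟩ ⟨hv, (hux.trans_le hx.2).ne'⟩ hx.2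
  rw [slope_def_field, div_le_iff₀ (sub_pos.mpr hux)] at hslope
  linarith

lemma StrictConvexOn.slope_lt_slope (hf : StrictConvexOn 𝕜 s f) {u v b x : 𝕜} (hu : u ∈ s)
    (hx : x ∈ s) (huv : u < v) (hvb : v ≤ b) (hbx : b < x) : slope f u v < slope f b x := by
  have hvx : v < x := hvb.trans_lt hbx
  have hvs : v ∈ s := hf.1.ordConnected.out hu hx ⟨huv.le, hvx.le⟩
  have hbs : b ∈ s := hf.1.ordConnected.out hu hx ⟨huv.le.trans hvb, hbx.le⟩
  calc slope f u v < slope f v x := by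
        simpa only [slope_def_field] using hf.slope_strict_mono_adjacent hu hx huv hvx
    _ = slope f x v := slope_comm f v x
    _ ≤ slope f x b := hf.convexOn.slope_mono hx ⟨hvs, hvx.ne⟩ ⟨hbs, hbx.ne⟩ hvb
    _ = slope f b x := slope_comm f x b

end Convex

open Real

lemma mul_integral_exp_neg_affine (c σ p q : ℝ) :
    σ * ∫ x in p..q, exp (-(c + σ * (x - p))) = exp (-c) - exp (-(c + σ * (q - p))) := by
  have hderiv : ∀ x ∈ uIcc p q, HasDerivAt (fun x ↦ -exp (-(c + σ * (x - p))))
      (σ * exp (-(c + σ * (x - p)))) x := fun x _ ↦ by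
    have hlin : HasDerivAt (fun x ↦ -(c + σ * (x - p))) (-σ) x := by
      have := ((((hasDerivAt_id x).sub_const p).const_mul σ).const_add c).neg
      rwa [mul_one] at this
    exact hlin.exp.neg.congr_deriv (by ring)
  rw [← intervalIntegral.integral_const_mul,
    integral_eq_sub_of_hasDerivAt hderiv (Continuous.intervalIntegrable (by fun_prop) _ _)]
  simp only [sub_self, mul_zero, add_zero]
  ring

variable {ψ : ℝ → ℝ} {c σ p q : ℝ}

lemma ConvexOn.intervalIntegrable_exp_neg (hψ : ConvexOn ℝ univ ψ) (p q : ℝ) :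
    IntervalIntegrable (fun x ↦ exp (-ψ x)) volume p q :=
  have hcont : Continuous ψ := continuousOn_univ.mp (hψ.continuousOn isOpen_univ)
  Continuous.intervalIntegrable (by fun_prop) p q

lemma exp_neg_sub_le_mul_integral_exp_neg (hpq : p ≤ q) (hσ : 0 ≤ σ)
    (hint : IntervalIntegrable (fun x ↦ exp (-ψ x)) volume p q)
    (hle : ∀ x ∈ Icc p q, ψ x ≤ c + σ * (x - p)) :
    exp (-c) - exp (-(c + σ * (q - p))) ≤ σ * ∫ x in p..q, exp (-ψ x) := by
  rw [← mul_integral_exp_neg_affine]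
  refine mul_le_mul_of_nonneg_left (integral_mono_on hpq
    (Continuous.intervalIntegrable (by fun_prop) _ _) hint fun x hx ↦ ?_) hσ
  exact exp_le_exp.mpr (neg_le_neg (hle x hx))

lemma mul_integral_exp_neg_le_exp_neg_sub (hpq : p ≤ q) (hσ : 0 ≤ σ)
    (hint : IntervalIntegrable (fun x ↦ exp (-ψ x)) volume p q)
    (hle : ∀ x ∈ Icc p q, c + σ * (x - p) ≤ ψ x) :
    σ * ∫ x in p..q, exp (-ψ x) ≤ exp (-c) - exp (-(c + σ * (q - p))) := by
  rw [← mul_integral_exp_neg_affine]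
  refine mul_le_mul_of_nonneg_left (integral_mono_on hpq hint
    (Continuous.intervalIntegrable (by fun_prop) _ _) fun x hx ↦ ?_) hσ
  exact exp_le_exp.mpr (neg_le_neg (hle x hx))

lemma Function.Even.intervalIntegral_neg_neg {f : ℝ → ℝ} (hf : f.Even) (a b : ℝ) :
    ∫ x in -b..-a, f x = ∫ x in a..b, f x := by
  simp only [← integral_comp_neg, hf _]

lemma StrictConvexOn.exp_neg_add_exp_neg_lt_of_integral_le (hψ : StrictConvexOn ℝ univ ψ)
    {u v b b' : ℝ} (huv : u < v) (hvb : v ≤ b) (hbb' : b < b') (hψuv : ψ u ≤ ψ v)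
    (hint : ∫ x in u..v, exp (-ψ x) ≤ ∫ x in b..b', exp (-ψ x)) :
    exp (-ψ u) + exp (-ψ b') < exp (-ψ v) + exp (-ψ b) := by
  have hf_int := hψ.convexOn.intervalIntegrable_exp_neg
  set σ := slope ψ u v with hσ_def
  have hσ : 0 ≤ σ := by
    rw [hσ_def, slope_def_field]; exact div_nonneg (by linarith) (by linarith)
  have hψv : ψ u + σ * (v - u) = ψ v := by
    rw [mul_comm, ← smul_eq_mul, sub_smul_slope, vsub_eq_sub]; ring
  have hbelow_chord : ∀ x ∈ Icc u v, ψ x ≤ ψ u + σ * (x - u) := fun x hx ↦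
    hψ.convexOn.le_add_slope_mul (mem_univ u) (mem_univ v) hx
  have hline : ∀ x, b < x → ψ b + σ * (x - b) < ψ x := fun x hbx ↦ by
    have h := hψ.slope_lt_slope (mem_univ u) (mem_univ x) huv hvb hbx
    rw [← hσ_def, slope_def_field, lt_div_iff₀ (sub_pos.mpr hbx)] at h
    linarith
  have hleft := exp_neg_sub_le_mul_integral_exp_neg huv.le hσ (hf_int u v) hbelow_chord
  have habove_line : ∀ x ∈ Icc b b', ψ b + σ * (x - b) ≤ ψ x := fun x hx ↦ by
    rcases hx.1.eq_or_lt with rfl | hbx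
    · simp
    · exact (hline x hbx).le
  have hright := mul_integral_exp_neg_le_exp_neg_sub hbb'.le hσ (hf_int b b') habove_line
  have hend : exp (-ψ b') < exp (-(ψ b + σ * (b' - b))) :=
    exp_lt_exp.mpr (neg_lt_neg (hline b' hbb'))
  rw [hψv] at hleft
  linarith [mul_le_mul_of_nonneg_left hint hσ]

theorem stmt5_general (ψ : ℝ → ℝ) (hψ : StrictConvexOn ℝ Set.univ ψ)
    (hsymm : ∀ x : ℝ, ψ (-x) = ψ x)
    (a b a' b' : ℝ) (hab : a < b) (habs : 0 ≤ a + b)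
    (ha' : a < a')
    (hmeas : (∫ x in a'..b', Real.exp (-ψ x)) = ∫ x in a..b, Real.exp (-ψ x)) :
    Real.exp (-ψ a') + Real.exp (-ψ b') < Real.exp (-ψ a) + Real.exp (-ψ b) := by
  have hf_int := hψ.convexOn.intervalIntegrable_exp_neg
  have hf_nonneg : ∀ μ : Measure ℝ, 0 ≤ᵐ[μ] fun x ↦ exp (-ψ x) :=
    fun μ ↦ ae_of_all μ fun x ↦ (exp_pos _).le
  have hflank : ∫ x in b..b', exp (-ψ x) = ∫ x in a..a', exp (-ψ x) := by
    linarith [integral_interval_sub_interval_comm (hf_int a b) (hf_int a' b') (hf_int a a')]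
  have hbb' : b < b' := by
    have hpos := intervalIntegral_pos_of_pos (hf_int a a') (fun x ↦ exp_pos _) ha'
    rw [← hflank] at hpos
    exact ((integral_pos_iff_support_of_nonneg_ae' (hf_nonneg _) (hf_int b b')).mp hpos).1
  have heven : ψ.Even := hsymm
  have hψ_lt := hψ.lt_iff_abs_lt_of_even heven
  rcases le_or_gt (ψ a) (ψ a') with ha_le | ha_gt
  · have hψb : ψ b < ψ b' := (hψ_lt b b').mpr <| by
      rwa [abs_of_pos (by linarith), abs_of_pos (by linarith)]
    linarith [exp_le_exp.mpr (neg_le_neg ha_le), exp_lt_exp.mpr (neg_lt_neg hψb)]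
  · have habs_lt : |a'| < |a| := (hψ_lt a' a).mp ha_gt
    have ha : a < 0 := by
      by_contra! ha
      linarith [abs_of_nonneg ha, le_abs_self a']
    have huv : |a'| < -a := by rwa [abs_of_neg ha] at habs_lt
    have hint : ∫ x in |a'|..-a, exp (-ψ x) ≤ ∫ x in b..b', exp (-ψ x) := by
      rw [← Function.Even.intervalIntegral_neg_neg (fun x ↦ by simp only [hsymm]),
        neg_neg, hflank]
      exact integral_mono_interval le_rfl (by linarith) (neg_abs_le a') (hf_nonneg _) (hf_int a a')
    have hψuv : ψ |a'| ≤ ψ (-a) := by rw [heven.apply_abs, hsymm]; exact ha_gt.le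
    simpa only [heven.apply_abs, hsymm] using
      hψ.exp_neg_add_exp_neg_lt_of_integral_le huv (by linarith) hbb' hψuv hint

/-- for a strictly convex symmetric `ψ` and `m = e^{-ψ} dx`,
right-shifting an interval `(a,b)` with `a + b ≥ 0` while preserving its
`m`-measure strictly decreases its weighted perimeter
`e^{-ψ(a)} + e^{-ψ(b)}`. -/
theorem stmt5 (ψ : ℝ → ℝ) (hψ : StrictConvexOn ℝ Set.univ ψ)
    (hsymm : ∀ x : ℝ, ψ (-x) = ψ x)
    (a b a' b' : ℝ) (hab : a < b) (habs : 0 ≤ a + b)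
    (ha' : a < a') (hb' : a' < b')
    (hmeas : (∫ x in a'..b', Real.exp (-ψ x)) = ∫ x in a..b, Real.exp (-ψ x)) :
    Real.exp (-ψ a') + Real.exp (-ψ b') < Real.exp (-ψ a) + Real.exp (-ψ b) :=
  stmt5_general ψ hψ hsymm a b a' b' hab habs ha' hmeas
end

section
/- For every K > 0, N < 0, D ∈ (0,∞) and θ ∈ (0,1), one has K_{3,D}(θ) > I_{(K,N,∞)}(θ). -/
open Set MeasureTheory intervalIntegral

/-!
Write `a = (N - 1)√σ < 0`. For `s ≥ c` one has `cosh (√σ s) ≤ cosh (√σ c) e^{√σ (s - c)}`, so the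
density `cosh (√σ s)^{N-1}` dominates `cosh (√σ c)^{N-1} e^{a (s - c)}` on `(c, ∞)`; integrating
gives `I_{(K,N,∞)}(θ) ≤ -a (1 - θ)`. On the other side, `a ∫_x^y e^{a s} ds = e^{a y} - e^{a x}`
yields `-a (1 - θ) = (e^{a d₃} - e^{a D}) / ∫_0^D e^{a s} ds`, which is strictly below `K_{3,D}(θ)`.
-/

lemma Real.cosh_le_cosh_mul_exp_sub {x y : ℝ} (hyx : y ≤ x) :
    Real.cosh x ≤ Real.cosh y * Real.exp (x - y) := by
  rw [Real.cosh_eq, Real.cosh_eq]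
  have hx : Real.exp (x - y) * Real.exp y = Real.exp x := by rw [← Real.exp_add]; ring_nf
  have hnegx : Real.exp (-x) ≤ Real.exp (x - y) * Real.exp (-y) := by
    rw [← Real.exp_add]; exact Real.exp_le_exp.2 (by linarith)
  nlinarith [Real.exp_pos y, Real.exp_pos (x - y)]

lemma cosh_rpow_mul_exp_le_cosh_rpow {r p c s : ℝ} (hr : 0 ≤ r) (hp : p ≤ 0) (hcs : c ≤ s) :
    Real.cosh (r * c) ^ p * Real.exp (p * r * (s - c)) ≤ Real.cosh (r * s) ^ p := by
  have hcosh := Real.cosh_le_cosh_mul_exp_sub (mul_le_mul_of_nonneg_left hcs hr)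
  calc Real.cosh (r * c) ^ p * Real.exp (p * r * (s - c))
      = (Real.cosh (r * c) * Real.exp (r * s - r * c)) ^ p := by
        rw [Real.mul_rpow (Real.cosh_pos _).le (Real.exp_nonneg _), ← Real.exp_mul]
        ring_nf
    _ ≤ Real.cosh (r * s) ^ p := Real.rpow_le_rpow_of_nonpos (Real.cosh_pos _) hcosh hp

lemma cosh_rpow_le_neg_mul_setIntegral_Ioi {r p : ℝ} (hr : 0 < r) (hp : p < 0) (c : ℝ)
    (hint : IntegrableOn (fun s => Real.cosh (r * s) ^ p) (Ioi c)) :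
    Real.cosh (r * c) ^ p ≤ -(p * r) * ∫ s in Ioi c, Real.cosh (r * s) ^ p := by
  have hpr : p * r < 0 := mul_neg_of_neg_of_pos hp hr
  set A := Real.cosh (r * c) ^ p * Real.exp (-(p * r * c))
  have hshift : ∀ s, Real.cosh (r * c) ^ p * Real.exp (p * r * (s - c))
      = A * Real.exp (p * r * s) := fun s => by
    simp only [A, mul_assoc, ← Real.exp_add]; ring_nf
  have hmono : ∫ s in Ioi c, A * Real.exp (p * r * s) ≤ ∫ s in Ioi c, Real.cosh (r * s) ^ p :=
    setIntegral_mono_on ((integrableOn_exp_mul_Ioi hpr c).const_mul A) hint measurableSet_Ioi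
      fun s hs => hshift s ▸ cosh_rpow_mul_exp_le_cosh_rpow hr.le hp.le (le_of_lt hs)
  have hexp : ∫ s in Ioi c, A * Real.exp (p * r * s) = Real.cosh (r * c) ^ p / -(p * r) := by
    rw [MeasureTheory.integral_const_mul, integral_exp_mul_Ioi hpr, mul_div_assoc', mul_neg,
      mul_assoc, ← Real.exp_add, neg_add_cancel, Real.exp_zero, mul_one, neg_div, div_neg]
  rw [hexp, div_le_iff₀ (by linarith)] at hmono
  linarith

lemma cosh_rpow_div_integral_le {r p c θ : ℝ} (hr : 0 < r) (hp : p < 0)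
    (hint : Integrable fun s => Real.cosh (r * s) ^ p)
    (hθ : θ = (∫ s in Iic c, Real.cosh (r * s) ^ p) / ∫ s, Real.cosh (r * s) ^ p) :
    Real.cosh (r * c) ^ p / (∫ s, Real.cosh (r * s) ^ p) ≤ -(p * r) * (1 - θ) := by
  have hpos : ∀ s, 0 < Real.cosh (r * s) ^ p := fun s => Real.rpow_pos_of_pos (Real.cosh_pos _) _
  have hm : 0 < ∫ s, Real.cosh (r * s) ^ p :=
    (integral_pos_iff_support_of_nonneg (fun s => (hpos s).le) hint).2 <| by
      simp [Function.support_eq_univ fun s => (hpos s).ne']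
  have hsplit := integral_Iic_add_Ioi (b := c) hint.integrableOn hint.integrableOn
  have htail := cosh_rpow_le_neg_mul_setIntegral_Ioi hr hp c hint.integrableOn
  rw [div_le_iff₀ hm]
  rw [eq_div_iff hm.ne'] at hθ
  nlinarith [mul_neg_of_neg_of_pos hp hr]

lemma mul_intervalIntegral_exp_mul {a : ℝ} (ha : a ≠ 0) (x y : ℝ) :
    a * ∫ s in x..y, Real.exp (a * s) = Real.exp (a * y) - Real.exp (a * x) := by
  rw [integral_comp_mul_left Real.exp ha, integral_exp, smul_eq_mul, mul_inv_cancel_left₀ ha]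

lemma neg_mul_one_sub_div_intervalIntegral_exp_lt {a D : ℝ} (ha : a < 0) (hD : 0 < D) (d : ℝ) :
    -a * (1 - (∫ s in (0:ℝ)..d, Real.exp (a * s)) / ∫ s in (0:ℝ)..D, Real.exp (a * s)) <
      Real.exp (a * d) / ∫ s in (0:ℝ)..D, Real.exp (a * s) := by
  have hEd := mul_intervalIntegral_exp_mul ha.ne 0 d
  have hED := mul_intervalIntegral_exp_mul ha.ne 0 D
  have hpos : 0 < ∫ s in (0:ℝ)..D, Real.exp (a * s) :=
    intervalIntegral_pos_of_pos_on (Real.continuous_exp.comp (continuous_const_mul a)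
      |>.intervalIntegrable _ _) (fun s _ => Real.exp_pos _) hD
  have hdiff : -a * ((∫ s in (0:ℝ)..D, Real.exp (a * s)) - ∫ s in (0:ℝ)..d, Real.exp (a * s))
      = Real.exp (a * d) - Real.exp (a * D) := by linear_combination hEd - hED
  rw [one_sub_div hpos.ne', mul_div_assoc', div_lt_div_iff_of_pos_right hpos, hdiff]
  linarith [Real.exp_pos (a * D)]

theorem stmt10_general (K N σ D θ : ℝ) (hK : 0 < K) (hN : N < 0) (hσ : σ = K / (1 - N))
    (hD : 0 < D) (hθ : θ ∈ Set.Ioo (0:ℝ) 1)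
    (c : ℝ)
    (hc : θ = (∫ s in Set.Iic c, Real.cosh (Real.sqrt σ * s) ^ (N - 1)) /
        (∫ s : ℝ, Real.cosh (Real.sqrt σ * s) ^ (N - 1)))
    (d₃ : ℝ)
    (hd₃ : θ = (∫ s in (0:ℝ)..d₃, Real.exp ((N - 1) * Real.sqrt σ * s)) /
        (∫ s in (0:ℝ)..D, Real.exp ((N - 1) * Real.sqrt σ * s))) :
    Real.exp ((N - 1) * Real.sqrt σ * d₃) /
        (∫ s in (0:ℝ)..D, Real.exp ((N - 1) * Real.sqrt σ * s)) >
      Real.cosh (Real.sqrt σ * c) ^ (N - 1) /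
        (∫ s : ℝ, Real.cosh (Real.sqrt σ * s) ^ (N - 1)) := by
  have hr : 0 < Real.sqrt σ := Real.sqrt_pos.2 (hσ ▸ div_pos hK (by linarith))
  have hp : N - 1 < 0 := by linarith
  -- a non-integrable density would have integral `0`, making `θ = 0`
  have hint : Integrable fun s => Real.cosh (Real.sqrt σ * s) ^ (N - 1) := by
    refine Integrable.of_integral_ne_zero fun hm => ?_
    rw [hm, div_zero] at hc
    exact hθ.1.ne' hc
  calc Real.cosh (Real.sqrt σ * c) ^ (N - 1) / (∫ s : ℝ, Real.cosh (Real.sqrt σ * s) ^ (N - 1))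
      ≤ -((N - 1) * Real.sqrt σ) * (1 - θ) := cosh_rpow_div_integral_le hr hp hint hc
    _ < _ := hd₃ ▸ neg_mul_one_sub_div_intervalIntegral_exp_lt (mul_neg_of_neg_of_pos hp hr) hD d₃

/-- `K_{3,D}(θ) > I_{(K,N,∞)}(θ)` for all `K > 0`, `N < 0`,
`D ∈ (0,∞)`, `θ ∈ (0,1)`.  Here `σ = K/(1-N)`, `c = c(θ)` is characterized by
`hc`, and `d₃ = d₃(θ) ∈ (0,D)` is characterized by `hd₃`. -/
theorem stmt10 (K N σ D θ : ℝ) (hK : 0 < K) (hN : N < 0) (hσ : σ = K / (1 - N))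
    (hD : 0 < D) (hθ : θ ∈ Set.Ioo (0:ℝ) 1)
    (c : ℝ)
    (hc : θ = (∫ s in Set.Iic c, Real.cosh (Real.sqrt σ * s) ^ (N - 1)) /
        (∫ s : ℝ, Real.cosh (Real.sqrt σ * s) ^ (N - 1)))
    (d₃ : ℝ) (hd₃mem : d₃ ∈ Set.Ioo 0 D)
    (hd₃ : θ = (∫ s in (0:ℝ)..d₃, Real.exp ((N - 1) * Real.sqrt σ * s)) /
        (∫ s in (0:ℝ)..D, Real.exp ((N - 1) * Real.sqrt σ * s))) :
    Real.exp ((N - 1) * Real.sqrt σ * d₃) /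
        (∫ s in (0:ℝ)..D, Real.exp ((N - 1) * Real.sqrt σ * s)) >
      Real.cosh (Real.sqrt σ * c) ^ (N - 1) /
        (∫ s : ℝ, Real.cosh (Real.sqrt σ * s) ^ (N - 1)) :=
  stmt10_general K N σ D θ hK hN hσ hD hθ c hc d₃ hd₃
end

section
/- For every K > 0, N < 0, D ∈ (0,∞) and θ ∈ (0,1), one has K_{2,D}(θ) > I_{(K,N,∞)}(θ). -/
/-!
Write `p = N - 1 < 0`, `q = √σ` and `λ = -p q = (1 - N) √σ`. Both sides are compared with
`λ (1 - θ)`. Since `cosh (x + t) < cosh x · eᵗ` for `t > 0`, the model density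
`cosh (q s) ^ p` decays strictly slower than `e^{-λ (s - c)}` beyond `c`, so its tail mass
`(1 - θ) m` exceeds `cosh (q c) ^ p / λ`, i.e. `I(θ) < λ (1 - θ)`. Since
`sinh (x + t) ≥ sinh x · eᵗ`, the density `sinh (q s) ^ p` decays at least as fast as
`e^{-λ (s - d)}` beyond `d`, so `(1 - θ) ∫_ξ^{ξ+D} ≤ sinh (q d) ^ p / λ` for every `ξ`;
hence `λ (1 - θ)` is a lower bound of the set whose infimum is `K_{2,D}(θ)`.
-/

open Set MeasureTheory intervalIntegral Real

lemma cosh_mul_exp_sub_cosh_add (x t : ℝ) :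
    cosh x * exp t - cosh (x + t) = exp (-x) * sinh t := by
  rw [cosh_add, ← cosh_add_sinh t, ← cosh_sub_sinh x]; ring

lemma sinh_add_sub_sinh_mul_exp (x t : ℝ) :
    sinh (x + t) - sinh x * exp t = exp (-x) * sinh t := by
  rw [sinh_add, ← cosh_add_sinh t, ← cosh_sub_sinh x]; ring

lemma mul_exp_rpow {a : ℝ} (ha : 0 ≤ a) (t p : ℝ) :
    (a * exp t) ^ p = a ^ p * exp (p * t) := by
  rw [mul_rpow ha (exp_pos t).le, ← exp_mul, mul_comm t p]

lemma cosh_rpow_mul_exp_lt_cosh_rpow {p x y : ℝ} (hp : p < 0) (hxy : x < y) :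
    cosh x ^ p * exp (p * (y - x)) < cosh y ^ p := by
  have hlt : cosh y < cosh x * exp (y - x) := by
    have := cosh_mul_exp_sub_cosh_add x (y - x)
    rw [add_sub_cancel] at this
    nlinarith [exp_pos (-x), sinh_pos_iff.2 (sub_pos.2 hxy)]
  rw [← mul_exp_rpow (cosh_pos x).le]
  exact rpow_lt_rpow_of_neg (cosh_pos y) hlt hp

lemma sinh_rpow_le_sinh_rpow_mul_exp {p x y : ℝ} (hp : p ≤ 0) (hx : 0 < x) (hxy : x ≤ y) :
    sinh y ^ p ≤ sinh x ^ p * exp (p * (y - x)) := by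
  have hle : sinh x * exp (y - x) ≤ sinh y := by
    have := sinh_add_sub_sinh_mul_exp x (y - x)
    rw [add_sub_cancel] at this
    nlinarith [exp_pos (-x), sinh_nonneg_iff.2 (sub_nonneg.2 hxy)]
  rw [← mul_exp_rpow (sinh_pos_iff.2 hx).le]
  exact rpow_le_rpow_of_nonpos (mul_pos (sinh_pos_iff.2 hx) (exp_pos _)) hle hp

lemma cosh_rpow_le_exp {p : ℝ} (hp : p ≤ 0) (y : ℝ) :
    cosh y ^ p ≤ 2⁻¹ ^ p * exp (p * y) := by
  rw [← mul_exp_rpow (by norm_num)]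
  refine rpow_le_rpow_of_nonpos (by positivity) ?_ hp
  rw [cosh_eq]
  linarith [exp_pos (-y)]

lemma integrable_cosh_mul_rpow {p q : ℝ} (hp : p < 0) (hq : 0 < q) :
    Integrable fun s => cosh (q * s) ^ p := by
  have hmeas : AEStronglyMeasurable (fun s => cosh (q * s) ^ p) :=
    ((by fun_prop : Continuous fun s => cosh (q * s)).rpow_const
      fun _ => Or.inl (cosh_pos _).ne').aestronglyMeasurable
  have hnorm (s : ℝ) : ‖cosh (q * s) ^ p‖ = cosh (q * s) ^ p :=
    norm_of_nonneg (rpow_nonneg (cosh_pos _).le p)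
  have hpq : p * q < 0 := mul_neg_of_neg_of_pos hp hq
  rw [← integrableOn_univ, ← Iic_union_Ioi (a := (0 : ℝ))]
  refine IntegrableOn.union ?_ ?_
  · refine ((integrableOn_exp_mul_Iic (neg_pos.2 hpq) 0).const_mul (2⁻¹ ^ p)).mono'
      hmeas.restrict (ae_of_all _ fun s => ?_)
    simpa [hnorm, mul_assoc] using cosh_rpow_le_exp hp.le (-(q * s))
  · refine ((integrableOn_exp_mul_Ioi hpq 0).const_mul (2⁻¹ ^ p)).mono'
      hmeas.restrict (ae_of_all _ fun s => ?_)
    rw [hnorm, mul_assoc]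
    exact cosh_rpow_le_exp hp.le (q * s)

lemma setIntegral_lt_setIntegral_of_lt {X : Type*} [MeasurableSpace X] {μ : Measure X}
    {f g : X → ℝ} {s : Set X} (hs : MeasurableSet s) (hμs : μ s ≠ 0)
    (hf : IntegrableOn f s μ) (hg : IntegrableOn g s μ) (hlt : ∀ x ∈ s, f x < g x) :
    ∫ x in s, f x ∂μ < ∫ x in s, g x ∂μ := by
  rw [← sub_pos, ← integral_sub hg hf]
  refine (setIntegral_pos_iff_support_of_nonneg_ae ?_ (hg.sub hf)).2 ?_
  · exact (ae_restrict_iff' hs).2 (ae_of_all _ fun x hx => sub_nonneg.2 (hlt x hx).le)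
  · have hsub : s ⊆ Function.support (fun x => g x - f x) ∩ s :=
      fun x hx => ⟨(sub_pos.2 (hlt x hx)).ne', hx⟩
    exact (pos_iff_ne_zero.2 hμs).trans_le (measure_mono hsub)

lemma integrableOn_exp_mul_sub_Ioi {k : ℝ} (hk : k < 0) (c : ℝ) :
    IntegrableOn (fun s => exp (k * (s - c))) (Ioi c) := by
  have := (integrableOn_exp_mul_Ioi hk c).div_const (exp (k * c))
  simp only [mul_sub, exp_sub]
  exact this

lemma setIntegral_exp_mul_sub_Ioi {k : ℝ} (hk : k < 0) (c : ℝ) :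
    ∫ s in Ioi c, exp (k * (s - c)) = -k⁻¹ := by
  simp only [mul_sub, exp_sub]
  rw [MeasureTheory.integral_div, integral_exp_mul_Ioi hk]
  field_simp [(exp_pos (k * c)).ne']

lemma lt_neg_mul_setIntegral_Ioi {g : ℝ → ℝ} {k c : ℝ} (hk : k < 0)
    (hg : IntegrableOn g (Ioi c)) (hlt : ∀ s ∈ Ioi c, g c * exp (k * (s - c)) < g s) :
    g c < -k * ∫ s in Ioi c, g s := by
  have hint := setIntegral_lt_setIntegral_of_lt measurableSet_Ioi (by simp)
    ((integrableOn_exp_mul_sub_Ioi hk c).const_mul (g c)) hg hlt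
  rw [MeasureTheory.integral_const_mul, setIntegral_exp_mul_sub_Ioi hk] at hint
  calc g c = -k * (g c * -k⁻¹) := by field_simp [hk.ne]
    _ < -k * ∫ s in Ioi c, g s := mul_lt_mul_of_pos_left hint (neg_pos.2 hk)

lemma neg_mul_integral_le_of_le_mul_exp {f : ℝ → ℝ} {k a b : ℝ} (hk : k < 0) (hab : a ≤ b)
    (hf : IntervalIntegrable f volume a b) (hfa : 0 ≤ f a)
    (hle : ∀ s ∈ Icc a b, f s ≤ f a * exp (k * (s - a))) :
    -k * ∫ s in a..b, f s ≤ f a := by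
  have hexp : ∫ s in a..b, exp (k * (s - a)) ≤ -k⁻¹ := by
    rw [integral_of_le hab, ← setIntegral_exp_mul_sub_Ioi hk a]
    exact setIntegral_mono_set (integrableOn_exp_mul_sub_Ioi hk a)
      (ae_of_all _ fun _ => (exp_pos _).le) Ioc_subset_Ioi_self.eventuallyLE
  have hk' : 0 ≤ -k := neg_nonneg.2 hk.le
  calc -k * ∫ s in a..b, f s ≤ -k * ∫ s in a..b, f a * exp (k * (s - a)) :=
        mul_le_mul_of_nonneg_left
          (integral_mono_on hab hf ((by fun_prop : Continuous _).intervalIntegrable _ _) hle) hk'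
    _ = f a * (-k * ∫ s in a..b, exp (k * (s - a))) := by
      rw [intervalIntegral.integral_const_mul]; ring
    _ ≤ f a * (-k * -k⁻¹) := by gcongr
    _ = f a := by field_simp [hk.ne]

lemma intervalIntegrable_sinh_mul_rpow {p q a b : ℝ} (hq : 0 < q) (ha : 0 < a) (hb : 0 < b) :
    IntervalIntegrable (fun s => sinh (q * s) ^ p) volume a b := by
  refine ContinuousOn.intervalIntegrable ?_
  refine (by fun_prop : Continuous fun s => sinh (q * s)).continuousOn.rpow_const
    fun x hx => Or.inl ?_
  exact (sinh_pos_iff.2 (mul_pos hq ((lt_min ha hb).trans_le hx.1))).ne'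

lemma integral_sinh_mul_rpow_pos {p q a b : ℝ} (hq : 0 < q) (ha : 0 < a) (hab : a < b) :
    0 < ∫ s in a..b, sinh (q * s) ^ p :=
  intervalIntegral_pos_of_pos_on (intervalIntegrable_sinh_mul_rpow hq ha (ha.trans hab))
    (fun _ hx => rpow_pos_of_pos (sinh_pos_iff.2 (mul_pos hq (ha.trans hx.1))) _) hab

lemma exists_integral_eq_mul_integral {f : ℝ → ℝ} {a b θ : ℝ} (hab : a ≤ b)
    (hf : IntervalIntegrable f volume a b) (hpos : 0 < ∫ s in a..b, f s) (hθ : θ ∈ Ioo 0 1) :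
    ∃ d ∈ Ioo a b, ∫ s in a..d, f s = θ * ∫ s in a..b, f s := by
  have hcont : ContinuousOn (fun x => ∫ s in a..x, f s) (Icc a b) := by
    simpa [uIcc_of_le hab] using continuousOn_primitive_interval' hf left_mem_uIcc
  have hmem : θ * ∫ s in a..b, f s ∈ Ioo (∫ s in a..a, f s) (∫ s in a..b, f s) := by
    rw [integral_same]
    exact ⟨mul_pos hθ.1 hpos, mul_lt_of_lt_one_left hpos hθ.2⟩
  exact intermediate_value_Ioo hab hcont hmem

lemma cosh_rpow_div_integral_lt {p q θ c : ℝ} (hp : p < 0) (hq : 0 < q) (hθ : θ ≠ 0)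
    (hc : θ = (∫ s in Iic c, cosh (q * s) ^ p) / ∫ s, cosh (q * s) ^ p) :
    cosh (q * c) ^ p / ∫ s, cosh (q * s) ^ p < -(p * q) * (1 - θ) := by
  have hint := integrable_cosh_mul_rpow hp hq
  set m := ∫ s, cosh (q * s) ^ p
  have hm0 : m ≠ 0 := by
    rintro h0
    rw [h0, div_zero] at hc
    exact hθ hc
  have hm : 0 < m := (integral_nonneg fun s => (rpow_pos_of_pos (cosh_pos _) p).le).lt_of_ne' hm0
  have htail : ∫ s in Ioi c, cosh (q * s) ^ p = (1 - θ) * m := by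
    rw [hc, sub_mul, div_mul_cancel₀ _ hm.ne', one_mul, eq_sub_iff_add_eq', ← compl_Iic,
      integral_add_compl measurableSet_Iic hint]
  have hlt : ∀ s ∈ Ioi c, cosh (q * c) ^ p * exp (p * q * (s - c)) < cosh (q * s) ^ p := by
    intro s hs
    convert cosh_rpow_mul_exp_lt_cosh_rpow hp (mul_lt_mul_of_pos_left hs hq) using 3
    ring
  have key := lt_neg_mul_setIntegral_Ioi (mul_neg_of_neg_of_pos hp hq) hint.integrableOn hlt
  rw [htail] at key
  rw [div_lt_iff₀ hm]
  linarith

lemma neg_mul_one_sub_le_sinh_rpow_div_integral {p q a b d θ : ℝ} (hp : p < 0) (hq : 0 < q)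
    (ha : 0 < a) (hd : d ∈ Ioo a b)
    (hθ : θ = (∫ s in a..d, sinh (q * s) ^ p) / ∫ s in a..b, sinh (q * s) ^ p) :
    -(p * q) * (1 - θ) ≤ sinh (q * d) ^ p / ∫ s in a..b, sinh (q * s) ^ p := by
  have hd0 : 0 < d := ha.trans hd.1
  have hb0 : 0 < b := hd0.trans hd.2
  set M := ∫ s in a..b, sinh (q * s) ^ p
  have hM : 0 < M := integral_sinh_mul_rpow_pos hq ha (hd.1.trans hd.2)
  have htail : ∫ s in d..b, sinh (q * s) ^ p = (1 - θ) * M := by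
    rw [hθ, sub_mul, div_mul_cancel₀ _ hM.ne', one_mul, eq_sub_iff_add_eq',
      integral_add_adjacent_intervals (intervalIntegrable_sinh_mul_rpow hq ha hd0)
        (intervalIntegrable_sinh_mul_rpow hq hd0 hb0)]
  have hle : ∀ s ∈ Icc d b, sinh (q * s) ^ p ≤ sinh (q * d) ^ p * exp (p * q * (s - d)) := by
    intro s hs
    convert sinh_rpow_le_sinh_rpow_mul_exp hp.le (mul_pos hq hd0)
      (mul_le_mul_of_nonneg_left hs.1 hq.le) using 3
    ring
  have key := neg_mul_integral_le_of_le_mul_exp (mul_neg_of_neg_of_pos hp hq) hd.2.le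
    (intervalIntegrable_sinh_mul_rpow hq hd0 hb0)
    (rpow_nonneg (sinh_pos_iff.2 (mul_pos hq hd0)).le _) hle
  rw [htail] at key
  rw [le_div_iff₀ hM]
  linarith

/-- `K_{2,D}(θ) > I_{(K,N,∞)}(θ)` for all `K > 0`, `N < 0`,
`D ∈ (0,∞)`, `θ ∈ (0,1)`.  Here `σ = K/(1-N)`, `c = c(θ)` is characterized by
`hc`, and `K_{2,D}(θ)` is the infimum over `ξ > 0` of the values
`sinh^{N-1}(√σ d_{2,ξ}(θ)) / ∫_ξ^{ξ+D} sinh^{N-1}(√σ s) ds`, expressed as the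
`sInf` of the set of such values (with `d = d_{2,ξ}(θ)` characterized
implicitly). -/
theorem stmt11 (K N σ D θ : ℝ) (hK : 0 < K) (hN : N < 0) (hσ : σ = K / (1 - N))
    (hD : 0 < D) (hθ : θ ∈ Set.Ioo (0:ℝ) 1)
    (c : ℝ)
    (hc : θ = (∫ s in Set.Iic c, Real.cosh (Real.sqrt σ * s) ^ (N - 1)) /
        (∫ s : ℝ, Real.cosh (Real.sqrt σ * s) ^ (N - 1))) :
    sInf { y : ℝ | ∃ ξ : ℝ, 0 < ξ ∧ ∃ d ∈ Set.Ioo ξ (ξ + D),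
        θ = (∫ s in ξ..d, Real.sinh (Real.sqrt σ * s) ^ (N - 1)) /
              (∫ s in ξ..(ξ + D), Real.sinh (Real.sqrt σ * s) ^ (N - 1)) ∧
        y = Real.sinh (Real.sqrt σ * d) ^ (N - 1) /
              (∫ s in ξ..(ξ + D), Real.sinh (Real.sqrt σ * s) ^ (N - 1)) } >
      Real.cosh (Real.sqrt σ * c) ^ (N - 1) /
        (∫ s : ℝ, Real.cosh (Real.sqrt σ * s) ^ (N - 1)) := by
  have hp : N - 1 < 0 := by linarith
  have hq : 0 < Real.sqrt σ := Real.sqrt_pos.2 (hσ ▸ div_pos hK (by linarith))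
  have hD1 : (1 : ℝ) < 1 + D := by linarith
  obtain ⟨d, hd, hd_eq⟩ := exists_integral_eq_mul_integral hD1.le
    (intervalIntegrable_sinh_mul_rpow hq one_pos (one_pos.trans hD1))
    (integral_sinh_mul_rpow_pos hq one_pos hD1) hθ
  refine (cosh_rpow_div_integral_lt hp hq hθ.1.ne' hc).trans_le
    (le_csInf ⟨_, 1, one_pos, d, hd, ?_, rfl⟩ ?_)
  · rw [hd_eq, mul_div_cancel_right₀ _ (integral_sinh_mul_rpow_pos hq one_pos hD1).ne']
  · rintro y ⟨ξ, hξ, d, hd, hθd, rfl⟩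
    exact neg_mul_one_sub_le_sinh_rpow_div_integral hp hq hξ hd hθd
end

section
/- Let K > 0, N < 0, σ := K/(1−N) and D ∈ (0,∞). Then the function m₀(ξ) := (∫_ξ^{ξ+D} cosh^{N−1}(√σ·s) ds)/cosh^{N−1}(√σ·ξ) is monotone decreasing on ℝ, and the function m₁(ξ) := (∫_ξ^{ξ+D} cosh^{N−1}(√σ·s) ds)/cosh^{N−1}(√σ·(ξ+D)) is monotone increasing on ℝ. -/
open MeasureTheory intervalIntegral

/-!
Substituting `s = ξ + t` and dividing under the integral sign writes both functions as
`∫₀ᴰ (f (ξ + t) / f a)^e dt` with `f s = cosh (√σ s)`, `e = N - 1 ≤ 0` and `a = ξ` resp.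
`a = ξ + D`. Since `cosh (x + u) / cosh x = cosh u + sinh u · tanh x` increases in `x`
for `u ≥ 0`, the integrand is antitone in `ξ` for `a = ξ` and monotone for `a = ξ + D`.
-/

theorem Real.monotone_cosh_add_div_cosh {u : ℝ} (hu : 0 ≤ u) :
    Monotone fun x => Real.cosh (x + u) / Real.cosh x := by
  intro x y hxy
  rw [div_le_div_iff₀ (Real.cosh_pos _) (Real.cosh_pos _)]
  have key : Real.cosh (y + u) * Real.cosh x - Real.cosh (x + u) * Real.cosh y
      = Real.sinh u * Real.sinh (y - x) := by
    rw [Real.cosh_add, Real.cosh_add, Real.sinh_sub]; ring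
  nlinarith [mul_nonneg (Real.sinh_nonneg_iff.2 hu) (Real.sinh_nonneg_iff.2 (sub_nonneg.2 hxy))]

section RatioOfIntegral

variable {f : ℝ → ℝ} {e : ℝ}

theorem integral_rpow_div_rpow_eq_integral_div_rpow (hpos : ∀ x, 0 < f x) (ξ D a : ℝ) :
    (∫ s in ξ..(ξ + D), f s ^ e) / f a ^ e = ∫ t in (0 : ℝ)..D, (f (ξ + t) / f a) ^ e := by
  simp_rw [Real.div_rpow (hpos _).le (hpos _).le, intervalIntegral.integral_div]
  congr 1
  simpa using (intervalIntegral.integral_comp_add_left (fun s => f s ^ e) ξ (a := 0) (b := D)).symm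

theorem intervalIntegrable_div_rpow (hf : Continuous f) (hpos : ∀ x, 0 < f x) (ξ a D : ℝ) :
    IntervalIntegrable (fun t => (f (ξ + t) / f a) ^ e) volume 0 D :=
  ((hf.comp (continuous_const_add ξ)).div_const _ |>.rpow_const
    fun _ => Or.inl (div_pos (hpos _) (hpos _)).ne').intervalIntegrable _ _

variable (hf : Continuous f) (hpos : ∀ x, 0 < f x)
  (hratio : ∀ u, 0 ≤ u → Monotone fun x => f (x + u) / f x) (he : e ≤ 0) {D : ℝ} (hD : 0 ≤ D)
include hf hpos hratio he hD

theorem antitone_integral_rpow_div_rpow_left :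
    Antitone fun ξ => (∫ s in ξ..(ξ + D), f s ^ e) / f ξ ^ e := by
  intro ξ₁ ξ₂ hξ
  simp only [integral_rpow_div_rpow_eq_integral_div_rpow hpos]
  refine integral_mono_on hD (intervalIntegrable_div_rpow hf hpos _ _ _)
    (intervalIntegrable_div_rpow hf hpos _ _ _) fun t ht => ?_
  exact Real.rpow_le_rpow_of_nonpos (div_pos (hpos _) (hpos _)) (hratio t ht.1 hξ) he

theorem monotone_integral_rpow_div_rpow_right :
    Monotone fun ξ => (∫ s in ξ..(ξ + D), f s ^ e) / f (ξ + D) ^ e := by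
  intro ξ₁ ξ₂ hξ
  simp only [integral_rpow_div_rpow_eq_integral_div_rpow hpos]
  refine integral_mono_on hD (intervalIntegrable_div_rpow hf hpos _ _ _)
    (intervalIntegrable_div_rpow hf hpos _ _ _) fun t ht => ?_
  have hflip : ∀ ξ, f (ξ + t) / f (ξ + D) = (f (ξ + t + (D - t)) / f (ξ + t))⁻¹ := fun ξ => by
    rw [inv_div, add_assoc, add_sub_cancel]
  have hle := hratio (D - t) (sub_nonneg.2 ht.2) (add_le_add_left hξ t)
  rw [hflip, hflip]
  exact Real.rpow_le_rpow_of_nonpos (inv_pos.2 (div_pos (hpos _) (hpos _)))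
    (inv_anti₀ (div_pos (hpos _) (hpos _)) hle) he

end RatioOfIntegral

theorem stmt17_general (N σ D : ℝ) (hN : N < 0)
    (hD : 0 < D) :
    Antitone (fun ξ : ℝ =>
        (∫ s in ξ..(ξ + D), Real.cosh (Real.sqrt σ * s) ^ (N - 1)) /
          Real.cosh (Real.sqrt σ * ξ) ^ (N - 1)) ∧
    Monotone (fun ξ : ℝ =>
        (∫ s in ξ..(ξ + D), Real.cosh (Real.sqrt σ * s) ^ (N - 1)) /
          Real.cosh (Real.sqrt σ * (ξ + D)) ^ (N - 1)) := by
  have hc : 0 ≤ Real.sqrt σ := Real.sqrt_nonneg σ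
  have hf : Continuous fun s => Real.cosh (Real.sqrt σ * s) := by fun_prop
  have hpos : ∀ s, 0 < Real.cosh (Real.sqrt σ * s) := fun _ => Real.cosh_pos _
  have hratio : ∀ u, 0 ≤ u → Monotone fun x =>
      Real.cosh (Real.sqrt σ * (x + u)) / Real.cosh (Real.sqrt σ * x) := fun u hu => by
    simp_rw [mul_add]
    exact (Real.monotone_cosh_add_div_cosh (mul_nonneg hc hu)).comp (monotone_mul_left_of_nonneg hc)
  have he : N - 1 ≤ 0 := by linarith
  exact ⟨antitone_integral_rpow_div_rpow_left hf hpos hratio he hD.le,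
    monotone_integral_rpow_div_rpow_right hf hpos hratio he hD.le⟩

/-- for `K > 0`, `N < 0`, `σ = K/(1-N)`, `D ∈ (0,∞)`, the
function `m₀(ξ) = (∫_ξ^{ξ+D} cosh^{N-1}(√σ s) ds)/cosh^{N-1}(√σ ξ)` is
monotone decreasing on ℝ and
`m₁(ξ) = (∫_ξ^{ξ+D} cosh^{N-1}(√σ s) ds)/cosh^{N-1}(√σ (ξ+D))` is monotone
increasing on ℝ. -/
theorem stmt17 (K N σ D : ℝ) (hK : 0 < K) (hN : N < 0) (hσ : σ = K / (1 - N))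
    (hD : 0 < D) :
    Antitone (fun ξ : ℝ =>
        (∫ s in ξ..(ξ + D), Real.cosh (Real.sqrt σ * s) ^ (N - 1)) /
          Real.cosh (Real.sqrt σ * ξ) ^ (N - 1)) ∧
    Monotone (fun ξ : ℝ =>
        (∫ s in ξ..(ξ + D), Real.cosh (Real.sqrt σ * s) ^ (N - 1)) /
          Real.cosh (Real.sqrt σ * (ξ + D)) ^ (N - 1)) :=
  stmt17_general N σ D hN hD
end

section
/- Let K > 0, N < 0, σ := K/(1−N), D ∈ (0,∞), ξ > 0 and θ ∈ (0,1). If d ∈ (ξ, ξ+D) satisfies ∫_ξ^{d} sinh^{N−1}(√σ·s) ds = θ·∫_ξ^{ξ+D} sinh^{N−1}(√σ·s) ds, then d ≤ (θ·(ξ+D)^N + (1−θ)·ξ^N)^{1/N}. -/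
open Set MeasureTheory intervalIntegral

/-!
Since `sinh x / x` is increasing (`sinh` is convex on `[0, ∞)` and vanishes at `0`) and `N - 1 < 0`,
the integrand factors as `sinh (√σ s) ^ (N - 1) = g s * s ^ (N - 1)` with `g` antitone. Splitting
`[ξ, ξ + D]` at `d` and comparing `g` with `g d` on both pieces shows that `[ξ, d]` carries a
share of the mass of `g s * s ^ (N - 1)` at least as large as its share of the mass of
`s ^ (N - 1)`. So `∫_ξ^d s ^ (N - 1) ≤ θ ∫_ξ^{ξ+D} s ^ (N - 1)`, and integrating the power explicitly
gives `θ (ξ + D) ^ N + (1 - θ) ξ ^ N ≤ d ^ N`.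
-/

namespace Real

lemma convexOn_sinh_Ici : ConvexOn ℝ (Ici 0) sinh := by
  refine MonotoneOn.convexOn_of_deriv (convex_Ici 0) continuous_sinh.continuousOn
    differentiable_sinh.differentiableOn ?_
  rw [deriv_sinh, interior_Ici]
  intro x hx y hy hxy
  exact cosh_le_cosh.2 (by rwa [abs_of_pos hx, abs_of_pos (mem_Ioi.1 hy)])

lemma monotoneOn_sinh_div_self : MonotoneOn (fun x => sinh x / x) (Ioi 0) := by
  intro x (hx : 0 < x) y (hy : 0 < y) hxy
  have := convexOn_sinh_Ici.slope_mono self_mem_Ici (mem_sdiff_singleton.2 ⟨hx.le, hx.ne'⟩)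
    (mem_sdiff_singleton.2 ⟨hy.le, hy.ne'⟩) hxy
  simpa [slope_def_field] using this

lemma antitoneOn_sinh_mul_div_rpow {r p : ℝ} (hr : 0 < r) (hp : p ≤ 0) :
    AntitoneOn (fun s => (sinh (r * s) / s) ^ p) (Ioi 0) := by
  intro s (hs : 0 < s) t (ht : 0 < t) hst
  have rescale : ∀ u, 0 < u → sinh (r * u) / u = r * (sinh (r * u) / (r * u)) := by
    intro u hu
    field_simp
  have key : sinh (r * s) / s ≤ sinh (r * t) / t := by
    rw [rescale s hs, rescale t ht]
    exact mul_le_mul_of_nonneg_left (monotoneOn_sinh_div_self (mul_pos hr hs) (mul_pos hr ht)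
      (mul_le_mul_of_nonneg_left hst hr.le)) hr.le
  exact rpow_le_rpow_of_nonpos (div_pos (sinh_pos_iff.2 (mul_pos hr hs)) hs) key hp

end Real

theorem integral_mul_le_of_antitoneOn {g w : ℝ → ℝ} {a b c : ℝ} (hab : a ≤ b) (hbc : b ≤ c)
    (hg : AntitoneOn g (Icc a c)) (hw : ∀ s ∈ Icc a c, 0 ≤ w s)
    (hwi : IntervalIntegrable w volume a c)
    (hgwi : IntervalIntegrable (fun s => g s * w s) volume a c) :
    (∫ s in b..c, g s * w s) * ∫ s in a..b, w s ≤
      (∫ s in a..b, g s * w s) * ∫ s in b..c, w s := by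
  have hb : b ∈ uIcc a c := by rw [uIcc_of_le (hab.trans hbc)]; exact ⟨hab, hbc⟩
  have sub₁ : uIcc a b ⊆ uIcc a c := uIcc_subset_uIcc left_mem_uIcc hb
  have sub₂ : uIcc b c ⊆ uIcc a c := uIcc_subset_uIcc hb right_mem_uIcc
  have upper : ∫ s in b..c, g s * w s ≤ g b * ∫ s in b..c, w s := by
    rw [← intervalIntegral.integral_const_mul]
    refine integral_mono_on hbc (hgwi.mono_set sub₂) ((hwi.mono_set sub₂).const_mul _) ?_
    intro s hs
    exact mul_le_mul_of_nonneg_right (hg ⟨hab, hbc⟩ ⟨hab.trans hs.1, hs.2⟩ hs.1)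
      (hw s ⟨hab.trans hs.1, hs.2⟩)
  have lower : g b * ∫ s in a..b, w s ≤ ∫ s in a..b, g s * w s := by
    rw [← intervalIntegral.integral_const_mul]
    refine integral_mono_on hab ((hwi.mono_set sub₁).const_mul _) (hgwi.mono_set sub₁) ?_
    intro s hs
    exact mul_le_mul_of_nonneg_right (hg ⟨hs.1, hs.2.trans hbc⟩ ⟨hab, hbc⟩ hs.2)
      (hw s ⟨hs.1, hs.2.trans hbc⟩)
  have hwab : 0 ≤ ∫ s in a..b, w s := integral_nonneg hab fun s hs => hw s ⟨hs.1, hs.2.trans hbc⟩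
  have hwbc : 0 ≤ ∫ s in b..c, w s := integral_nonneg hbc fun s hs => hw s ⟨hab.trans hs.1, hs.2⟩
  calc (∫ s in b..c, g s * w s) * ∫ s in a..b, w s
      ≤ (g b * ∫ s in b..c, w s) * ∫ s in a..b, w s := mul_le_mul_of_nonneg_right upper hwab
    _ = (g b * ∫ s in a..b, w s) * ∫ s in b..c, w s := by ring
    _ ≤ (∫ s in a..b, g s * w s) * ∫ s in b..c, w s := mul_le_mul_of_nonneg_right lower hwbc

theorem integral_le_mul_of_antitoneOn_of_integral_mul_eq {g w : ℝ → ℝ} {a b c θ : ℝ}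
    (hab : a ≤ b) (hbc : b ≤ c) (hg : AntitoneOn g (Icc a c)) (hw : ∀ s ∈ Icc a c, 0 ≤ w s)
    (hwi : IntervalIntegrable w volume a c)
    (hgwi : IntervalIntegrable (fun s => g s * w s) volume a c) (hθ : 0 ≤ θ)
    (hpos : 0 < ∫ s in a..b, g s * w s)
    (heq : ∫ s in a..b, g s * w s = θ * ∫ s in a..c, g s * w s) :
    ∫ s in a..b, w s ≤ θ * ∫ s in a..c, w s := by
  have hb : b ∈ uIcc a c := by rw [uIcc_of_le (hab.trans hbc)]; exact ⟨hab, hbc⟩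
  have split : ∀ f : ℝ → ℝ, IntervalIntegrable f volume a c →
      ∫ s in a..c, f s = (∫ s in a..b, f s) + ∫ s in b..c, f s := fun f hf =>
    (integral_add_adjacent_intervals (hf.mono_set (uIcc_subset_uIcc left_mem_uIcc hb))
      (hf.mono_set (uIcc_subset_uIcc hb right_mem_uIcc))).symm
  have key := integral_mul_le_of_antitoneOn hab hbc hg hw hwi hgwi
  rw [split _ hgwi] at heq
  rw [split _ hwi]
  set A := ∫ s in a..b, g s * w s
  set B := ∫ s in b..c, g s * w s
  set u := ∫ s in a..b, w s
  set v := ∫ s in b..c, w s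
  -- `A = θ (A + B)` reads `(1 - θ) A = θ B`; multiply the goal by `A` and compare with `B u ≤ A v`.
  refine le_of_mul_le_mul_left ?_ hpos
  linear_combination u * heq + mul_le_mul_of_nonneg_left key hθ

theorem le_rpow_one_div_of_integral_rpow_le {N θ ξ d e : ℝ} (hN : N < 0) (hθ : θ ≤ 1)
    (hξ : 0 < ξ) (hξd : ξ ≤ d) (hde : d ≤ e)
    (h : ∫ s in ξ..d, s ^ (N - 1) ≤ θ * ∫ s in ξ..e, s ^ (N - 1)) :
    d ≤ (θ * e ^ N + (1 - θ) * ξ ^ N) ^ (1 / N) := by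
  have hd : 0 < d := hξ.trans_le hξd
  have he : 0 < e := hd.trans_le hde
  have zero_notMem : ∀ x, ξ ≤ x → (0 : ℝ) ∉ uIcc ξ x := fun x hx h0 => by
    rw [uIcc_of_le hx] at h0
    exact hξ.not_ge h0.1
  have hN1 : N - 1 ≠ -1 := by intro h; linarith
  rw [integral_rpow (Or.inr ⟨hN1, zero_notMem d hξd⟩),
    integral_rpow (Or.inr ⟨hN1, zero_notMem e (hξd.trans hde)⟩), sub_add_cancel,
    ← mul_div_assoc, div_le_div_right_of_neg hN] at h
  have hpos : 0 < θ * e ^ N + (1 - θ) * ξ ^ N := by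
    have hmono : e ^ N ≤ ξ ^ N := Real.rpow_le_rpow_of_nonpos hξ (hξd.trans hde) hN.le
    nlinarith [Real.rpow_pos_of_pos he N, mul_nonneg (sub_nonneg.2 hθ) (sub_nonneg.2 hmono)]
  rw [one_div, Real.le_rpow_inv_iff_of_neg hd hpos hN]
  linarith

theorem stmt18_general (K N σ D ξ θ : ℝ) (hK : 0 < K) (hN : N < 0) (hσ : σ = K / (1 - N))
    (hξ : 0 < ξ) (hθ : θ ∈ Set.Ioo (0:ℝ) 1)
    (d : ℝ) (hd : d ∈ Set.Ioo ξ (ξ + D))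
    (heq : (∫ s in ξ..d, Real.sinh (Real.sqrt σ * s) ^ (N - 1)) =
      θ * ∫ s in ξ..(ξ + D), Real.sinh (Real.sqrt σ * s) ^ (N - 1)) :
    d ≤ (θ * (ξ + D) ^ N + (1 - θ) * ξ ^ N) ^ (1 / N) := by
  set r := Real.sqrt σ
  have hr : 0 < r := Real.sqrt_pos.2 (hσ ▸ div_pos hK (by linarith))
  have hsinh : ∀ s ∈ Ioi (0 : ℝ), 0 < Real.sinh (r * s) := fun s hs =>
    Real.sinh_pos_iff.2 (mul_pos hr hs)
  have hcont : ContinuousOn (fun s => Real.sinh (r * s) ^ (N - 1)) (Ioi 0) :=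
    ContinuousOn.rpow_const (by fun_prop) fun s hs => Or.inl (hsinh s hs).ne'
  set g := fun s : ℝ => (Real.sinh (r * s) / s) ^ (N - 1)
  have hfactor : EqOn (fun s => Real.sinh (r * s) ^ (N - 1)) (fun s => g s * s ^ (N - 1))
      (Ioi 0) := fun s (hs : 0 < s) => by
    simp only [g]
    rw [Real.div_rpow (hsinh s hs).le hs.le, div_mul_cancel₀ _ (Real.rpow_pos_of_pos hs _).ne']
  have hsub : ∀ x, ξ ≤ x → uIcc ξ x ⊆ Ioi 0 := fun x hx s hs =>
    hξ.trans_le (by rw [uIcc_of_le hx] at hs; exact hs.1)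
  have hId := hsub d hd.1.le
  have hI := hsub _ (hd.1.trans hd.2).le
  rw [integral_congr (hfactor.mono hId), integral_congr (hfactor.mono hI)] at heq
  have hA : 0 < ∫ s in ξ..d, g s * s ^ (N - 1) := by
    rw [← integral_congr (hfactor.mono hId)]
    exact intervalIntegral_pos_of_pos_on (hcont.mono hId).intervalIntegrable
      (fun s hs => Real.rpow_pos_of_pos (hsinh s (hξ.trans hs.1)) _) hd.1
  refine le_rpow_one_div_of_integral_rpow_le hN hθ.2.le hξ hd.1.le hd.2.le ?_
  exact integral_le_mul_of_antitoneOn_of_integral_mul_eq hd.1.le hd.2.le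
    ((Real.antitoneOn_sinh_mul_div_rpow hr (by linarith)).mono fun s hs => hξ.trans_le hs.1)
    (fun s hs => (Real.rpow_pos_of_pos (hξ.trans_le hs.1) _).le)
    (intervalIntegrable_rpow (Or.inr fun h0 => (mem_Ioi.1 (hI h0)).false))
    ((hcont.mono hI).congr (hfactor.symm.mono hI)).intervalIntegrable hθ.1.le hA heq

/-- for `K > 0`, `N < 0`, `σ = K/(1-N)`, `D ∈ (0,∞)`, `ξ > 0`
and `θ ∈ (0,1)`, if `d ∈ (ξ, ξ+D)` satisfies
`∫_ξ^d sinh^{N-1}(√σ s) ds = θ ∫_ξ^{ξ+D} sinh^{N-1}(√σ s) ds`, then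
`d ≤ (θ (ξ+D)^N + (1-θ) ξ^N)^{1/N}`. -/
theorem stmt18 (K N σ D ξ θ : ℝ) (hK : 0 < K) (hN : N < 0) (hσ : σ = K / (1 - N))
    (hD : 0 < D) (hξ : 0 < ξ) (hθ : θ ∈ Set.Ioo (0:ℝ) 1)
    (d : ℝ) (hd : d ∈ Set.Ioo ξ (ξ + D))
    (heq : (∫ s in ξ..d, Real.sinh (Real.sqrt σ * s) ^ (N - 1)) =
      θ * ∫ s in ξ..(ξ + D), Real.sinh (Real.sqrt σ * s) ^ (N - 1)) :
    d ≤ (θ * (ξ + D) ^ N + (1 - θ) * ξ ^ N) ^ (1 / N) :=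
  stmt18_general K N σ D ξ θ hK hN hσ hξ hθ d hd heq
end
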